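/- arXiv:0911.1419 — 4 statements merged into one kernel-verified Lean document; each statement's English description precedes it below -/
import Mathlib

section
/- For any doubly stochastic N×N real matrix β with all entries strictly between 0 and 1, and any positive N×N matrix P satisfying the BP fixed-point equations β_i^j(1-β_i^j) = P_i^j · exp(μ_i + μ^j) for some real vectors μ_i, μ^j, the permanent of P equals Z_BP · Perm(β.*(1-β)) / ∏_{i,j}(1-β_i^j), where Z_BP = ∏_{i,j}[(1-β_i^j) · (P_i^j/(β_i^j(1-β_i^j)))^{β_i^j}] and .* denotes entrywise multiplication. -/
open Matrix Finset

lemma permanent_smul_rows_cols (N : ℕ) (a b : Fin N → ℝ)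
    (M : Matrix (Fin N) (Fin N) ℝ) :
    Matrix.permanent (Matrix.of fun i j => a i * b j * M i j) =
      (∏ i, a i) * (∏ j, b j) * M.permanent := by
  unfold Matrix.permanent
  rw [Finset.mul_sum]
  refine Finset.sum_congr rfl fun σ _ => ?_
  simp only [Matrix.of_apply, Finset.prod_mul_distrib]
  rw [Equiv.prod_comp σ a]

/-- Bethe free energy representation of the permanent: for any interior BP fixed
point `β`, `Perm(P) = Z_BP * Perm(β.*(1-β)) / ∏ (1-β)`. -/
theorem permanent_eq_ZBP_mul_permanent_div
    (N : ℕ) (P β : Matrix (Fin N) (Fin N) ℝ) (μr μc : Fin N → ℝ)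
    (hP : ∀ i j, 0 < P i j)
    (hβ0 : ∀ i j, 0 < β i j) (hβ1 : ∀ i j, β i j < 1)
    (hrow : ∀ i, ∑ j, β i j = 1) (hcol : ∀ j, ∑ i, β i j = 1)
    (hBP : ∀ i j, β i j * (1 - β i j) = P i j * Real.exp (μr i + μc j)) :
    P.permanent =
      (∏ i, ∏ j, (1 - β i j) * (P i j / (β i j * (1 - β i j))) ^ (β i j)) *
        Matrix.permanent (Matrix.of fun i j => β i j * (1 - β i j)) /
        ∏ i, ∏ j, (1 - β i j) := by
  have hq : ∀ i j, (0:ℝ) < β i j * (1 - β i j) := fun i j =>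
    mul_pos (hβ0 i j) (by linarith [hβ1 i j])
  have hPeq : ∀ i j, P i j = Real.exp (-μr i) * Real.exp (-μc j) * (β i j * (1 - β i j)) := by
    intro i j
    have h := hBP i j
    have he := Real.exp_pos (μr i + μc j)
    rw [← Real.exp_add, ← neg_add, Real.exp_neg]
    field_simp
    linarith [h]
  have hratio : ∀ i j, P i j / (β i j * (1 - β i j)) = Real.exp (-(μr i + μc j)) := by
    intro i j
    rw [hPeq i j, mul_div_assoc, div_self (ne_of_gt (hq i j)), mul_one, ← Real.exp_add,
      neg_add (μr i)]
  -- compute Z_BP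
  have hsum : (∑ i, ∑ j, -(μr i + μc j) * β i j) = -(∑ i, μr i) - ∑ j, μc j := by
    have key : ∀ i, ∑ j, -(μr i + μc j) * β i j = -(μr i) - ∑ j, μc j * β i j := by
      intro i
      have h1 : ∑ j, -(μr i + μc j) * β i j
          = -((∑ j, μr i * β i j) + ∑ j, μc j * β i j) := by
        rw [← Finset.sum_add_distrib, ← Finset.sum_neg_distrib]
        exact Finset.sum_congr rfl fun j _ => by ring
      rw [h1, ← Finset.mul_sum, hrow i, mul_one]
      ring
    simp only [key]
    rw [Finset.sum_sub_distrib, Finset.sum_neg_distrib, Finset.sum_comm]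
    have h2 : ∀ j, ∑ i, μc j * β i j = μc j := by
      intro j; rw [← Finset.mul_sum, hcol j, mul_one]
    simp only [h2]
  have hZ : (∏ i, ∏ j, (1 - β i j) * (P i j / (β i j * (1 - β i j))) ^ (β i j)) =
      (∏ i, ∏ j, (1 - β i j)) * Real.exp (-(∑ i, μr i) - ∑ j, μc j) := by
    have step : ∀ i j, (1 - β i j) * (P i j / (β i j * (1 - β i j))) ^ (β i j) =
        (1 - β i j) * Real.exp (-(μr i + μc j) * β i j) := by
      intro i j
      rw [hratio i j, Real.exp_mul]
    simp only [step, Finset.prod_mul_distrib, ← Real.exp_sum, hsum]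
  -- compute Perm P
  have hPmat : P = Matrix.of fun i j => Real.exp (-μr i) * Real.exp (-μc j) *
      (Matrix.of (fun i j => β i j * (1 - β i j)) i j) := by
    ext i j; simpa using hPeq i j
  have hpermP : P.permanent = Real.exp (-(∑ i, μr i)) * Real.exp (-(∑ j, μc j)) *
      (Matrix.of fun i j => β i j * (1 - β i j)).permanent := by
    rw [hPmat, permanent_smul_rows_cols]
    congr 2 <;> rw [← Real.exp_sum, Finset.sum_neg_distrib]
  have hA : (∏ i, ∏ j, (1 - β i j)) ≠ 0 := by
    refine ne_of_gt (Finset.prod_pos fun i _ => Finset.prod_pos fun j _ => ?_)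
    linarith [hβ1 i j]
  rw [hpermP, hZ]
  rw [sub_eq_add_neg, Real.exp_add]
  field_simp
end

section
/- For a doubly stochastic N×N matrix β (N ≥ 2) with entries in [0,1] and any permutation Π of {1,...,N}, Perm(β.*(1-β)) ≥ 2 · ∏_i β_i^{Π(i)}(1-β_i^{Π(i)}). -/
/-!
Expanding `1 - β i j = ∑_{k ≠ j} β i k` row by row writes `∏_i β i (σ i) (1 - β i (σ i))` as a sum
of weights `∏_i β i (σ i) β i (f i)` over the maps `f` with `f i ≠ σ i` for all `i`. For `σ = π`,
the map `π⁻¹ ∘ f` has no fixed point, so it contains a cycle `τ`; exchanging the roles of `π` and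
`f` on the support of `τ` turns `(π, f)` into `(π * τ, f')` with the same weight. This exchange is
injective, so the term of `π` is bounded by the sum of the terms of all `σ ≠ π`, and the permanent
is at least twice the term of `π`.
-/

open Equiv Finset Matrix

namespace Function

variable {α : Type*}

theorem exists_iterate_mem_periodicPts [Finite α] (f : α → α) (x : α) :
    ∃ n, f^[n] x ∈ periodicPts f := by
  obtain ⟨a, b, hab, h⟩ := Finite.exists_ne_map_eq_of_infinite fun n : ℕ => f^[n] x
  wlog hlt : a < b generalizing a b
  · exact this b a hab.symm h.symm (by omega)
  refine ⟨a, mk_mem_periodicPts (n := b - a) (by omega) ?_⟩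
  rw [IsPeriodicPt, IsFixedPt, ← iterate_add_apply, Nat.sub_add_cancel hlt.le]
  exact h.symm

theorem exists_perm_ne_one_of_forall_ne [Finite α] [Nonempty α] {f : α → α}
    (hf : ∀ x, f x ≠ x) : ∃ τ : Perm α, τ ≠ 1 ∧ ∀ x, τ x ≠ x → τ x = f x := by
  classical
  let τ := Perm.ofSubtype ((bijOn_periodicPts f).equiv f)
  have hτ : ∀ x ∈ periodicPts f, τ x = f x := fun x hx => Perm.ofSubtype_apply_of_mem _ hx
  obtain ⟨n, hn⟩ := exists_iterate_mem_periodicPts f (Classical.arbitrary α)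
  refine ⟨τ, fun h => hf _ ((hτ _ hn).symm.trans (by rw [h]; rfl)), fun x hx => ?_⟩
  by_contra hne
  exact hx (Perm.ofSubtype_apply_of_not_mem _ fun hp => hne (hτ x hp))

end Function

namespace Matrix

variable {n R : Type*} [DecidableEq n]

def exchange (π τ : Perm n) (f : n → n) : n → n := fun i => if τ i = i then f i else π i

theorem eq_of_exchange_eq {π τ : Perm n} {f₁ f₂ : n → n} (hτ₁ : ∀ i, τ i ≠ i → π (τ i) = f₁ i)
    (hτ₂ : ∀ i, τ i ≠ i → π (τ i) = f₂ i) (h : exchange π τ f₁ = exchange π τ f₂) : f₁ = f₂ := by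
  funext i
  by_cases hi : τ i = i
  · simpa [exchange, hi] using congrFun h i
  · rw [← hτ₁ i hi, ← hτ₂ i hi]

variable [Fintype n]

theorem permanent_eq_sum_prod_apply [CommSemiring R] (M : Matrix n n R) :
    M.permanent = ∑ σ : Perm n, ∏ i, M i (σ i) := by
  rw [← permanent_transpose]
  rfl

abbrev avoiding (s : n → n) : Finset (n → n) :=
  Fintype.piFinset fun i => univ.erase (s i)

theorem prod_mul_one_sub_eq_sum_avoiding [CommRing R] {β : Matrix n n R}
    (hrow : ∀ i, ∑ j, β i j = 1) (s : n → n) :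
    ∏ i, β i (s i) * (1 - β i (s i)) = ∑ f ∈ avoiding s, ∏ i, β i (s i) * β i (f i) := by
  have hsub : ∀ i, 1 - β i (s i) = ∑ j ∈ univ.erase (s i), β i j := fun i => by
    rw [sum_erase_eq_sub (mem_univ _), hrow]
  simp_rw [hsub, mul_sum]
  exact prod_univ_sum _ _

section exchange

variable {π τ : Perm n} {f : n → n}

theorem exchange_mem_avoiding (hf : f ∈ avoiding π) :
    exchange π τ f ∈ avoiding (π * τ) := by
  simp only [Fintype.mem_piFinset, mem_erase, mem_univ, and_true] at hf ⊢
  intro i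
  by_cases hi : τ i = i
  · simpa [exchange, hi] using hf i
  · simpa [exchange, hi] using Ne.symm hi

theorem prod_mul_exchange [CommMonoid R] (β : Matrix n n R) (hτ : ∀ i, τ i ≠ i → π (τ i) = f i) :
    ∏ i, β i ((π * τ) i) * β i (exchange π τ f i) = ∏ i, β i (π i) * β i (f i) := by
  refine prod_congr rfl fun i _ => ?_
  by_cases hi : τ i = i
  · simp [exchange, hi]
  · simp [exchange, hi, hτ i hi, mul_comm]

end exchange

theorem prod_mul_one_sub_le_sum_erase [CommRing R] [PartialOrder R] [IsOrderedRing R]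
    [Nonempty n] {β : Matrix n n R} (h0 : ∀ i j, 0 ≤ β i j) (hrow : ∀ i, ∑ j, β i j = 1)
    (π : Perm n) :
    ∏ i, β i (π i) * (1 - β i (π i)) ≤ ∑ σ ∈ univ.erase π, ∏ i, β i (σ i) * (1 - β i (σ i)) := by
  have hcycle : ∀ f ∈ avoiding π, ∃ τ : Perm n, τ ≠ 1 ∧ ∀ i, τ i ≠ i → π (τ i) = f i := by
    intro f hf
    have hfix : ∀ i, π.symm (f i) ≠ i := fun i h =>
      (mem_erase.1 (Fintype.mem_piFinset.1 hf i)).1 (π.symm_apply_eq.1 h)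
    obtain ⟨τ, hτ1, hτ⟩ := Function.exists_perm_ne_one_of_forall_ne hfix
    exact ⟨τ, hτ1, fun i hi => by rw [hτ i hi, apply_symm_apply]⟩
  choose! τ hτ1 hτ using hcycle
  let Φ : (n → n) → Σ _ : Perm n, n → n := fun f => ⟨π * τ f, exchange π (τ f) f⟩
  have hΦ : Set.InjOn Φ (avoiding π) := fun f₁ hf₁ f₂ hf₂ h => by
    obtain ⟨hττ, hex⟩ := Sigma.mk.inj_iff.1 h
    have hτ₂ := hτ f₂ hf₂
    rw [← mul_left_cancel hττ] at hex hτ₂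
    exact eq_of_exchange_eq (hτ f₁ hf₁) hτ₂ (eq_of_heq hex)
  simp only [prod_mul_one_sub_eq_sum_avoiding hrow, sum_sigma']
  calc ∑ f ∈ avoiding π, ∏ i, β i (π i) * β i (f i)
      = ∑ f ∈ avoiding π, ∏ i, β i ((Φ f).1 i) * β i ((Φ f).2 i) :=
        sum_congr rfl fun f hf => (prod_mul_exchange β (hτ f hf)).symm
    _ = ∑ x ∈ (avoiding π).image Φ, ∏ i, β i (x.1 i) * β i (x.2 i) :=
        (sum_image (f := fun x => ∏ i, β i (x.1 i) * β i (x.2 i)) hΦ).symm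
    _ ≤ _ := by
      refine sum_le_sum_of_subset_of_nonneg (image_subset_iff.2 fun f hf => ?_)
        fun x _ _ => prod_nonneg fun i _ => mul_nonneg (h0 _ _) (h0 _ _)
      refine mem_sigma.2 ⟨mem_erase.2 ⟨fun h => hτ1 f hf ?_, mem_univ _⟩, exchange_mem_avoiding hf⟩
      simpa [Φ] using h

end Matrix

theorem permanent_beta_ge_two_mul_prod_general
    (N : ℕ) (hN : 2 ≤ N) (β : Matrix (Fin N) (Fin N) ℝ)
    (hβ : ∀ i j, 0 ≤ β i j ∧ β i j ≤ 1)
    (hrow : ∀ i, ∑ j, β i j = 1)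
    (π : Equiv.Perm (Fin N)) :
    Matrix.permanent (Matrix.of fun i j => β i j * (1 - β i j)) ≥
      2 * ∏ i, β i (π i) * (1 - β i (π i)) := by
  have : Nonempty (Fin N) := ⟨⟨0, by omega⟩⟩
  rw [permanent_eq_sum_prod_apply, ← add_sum_erase _ _ (mem_univ π), two_mul]
  exact add_le_add_right (prod_mul_one_sub_le_sum_erase (fun i j => (hβ i j).1) hrow π) _

/-- Lower bound on `Perm(β.*(1-β))` via an arbitrary permutation. -/
theorem permanent_beta_ge_two_mul_prod
    (N : ℕ) (hN : 2 ≤ N) (β : Matrix (Fin N) (Fin N) ℝ)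
    (hβ : ∀ i j, 0 ≤ β i j ∧ β i j ≤ 1)
    (hrow : ∀ i, ∑ j, β i j = 1) (hcol : ∀ j, ∑ i, β i j = 1)
    (π : Equiv.Perm (Fin N)) :
    Matrix.permanent (Matrix.of fun i j => β i j * (1 - β i j)) ≥
      2 * ∏ i, β i (π i) * (1 - β i (π i)) :=
  permanent_beta_ge_two_mul_prod_general N hN β hβ hrow π
end

section
/- (Godzil–Gutman identity in expectation) For any N×N real matrix A with nonnegative entries, Perm(A) = E[ det(√A .* σ)^2 ], where √A has entries √(A_i^j), σ is a random N×N matrix with independent entries taking values ±1 with probability 1/2 each, and .* is entrywise multiplication. Equivalently, 2^{-N²} ∑_{σ ∈ {±1}^{N×N}} det(√A .* σ)^2 = Perm(A). -/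
open Matrix Finset

private lemma gg_sum_sgn {N : ℕ} (a b : Fin N) :
    ∑ r : Fin N → Bool,
      (if r a then (1 : ℝ) else -1) * (if r b then (1 : ℝ) else -1)
      = if a = b then 2 ^ N else 0 := by
  have h : ∀ r : Fin N → Bool,
      (if r a then (1 : ℝ) else -1) * (if r b then (1 : ℝ) else -1)
      = ∏ j, ((if j = a then (if r j then (1:ℝ) else -1) else 1) *
              (if j = b then (if r j then (1:ℝ) else -1) else 1)) := by
    intro r
    rw [Finset.prod_mul_distrib, Finset.prod_ite_eq' , Finset.prod_ite_eq']
    simp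
  simp_rw [h]
  rw [← Fintype.prod_sum (fun j (x : Bool) =>
      (if j = a then (if x then (1:ℝ) else -1) else 1) *
      (if j = b then (if x then (1:ℝ) else -1) else 1))]
  by_cases hab : a = b
  · subst hab
    simp only [if_pos rfl]
    have : ∀ j : Fin N,
        (∑ x : Bool, ((if j = a then (if x then (1:ℝ) else -1) else 1) *
              (if j = a then (if x then (1:ℝ) else -1) else 1))) = 2 := by
      intro j
      by_cases hj : j = a <;> simp [hj, Fintype.sum_bool] <;> norm_num
    rw [Finset.prod_congr rfl (fun j _ => this j)]
    simp
  · rw [if_neg hab]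
    apply Finset.prod_eq_zero (Finset.mem_univ a)
    simp [hab, Ne.symm hab, Fintype.sum_bool]

private lemma gg_sum_sgn_perm {N : ℕ} (π τ : Equiv.Perm (Fin N)) :
    ∑ σ : Fin N → Fin N → Bool,
      ∏ i, ((if σ i (π i) then (1 : ℝ) else -1) * (if σ i (τ i) then (1 : ℝ) else -1))
      = if π = τ then 2 ^ (N ^ 2) else 0 := by
  rw [← Fintype.prod_sum (fun i (r : Fin N → Bool) =>
      (if r (π i) then (1 : ℝ) else -1) * (if r (τ i) then (1 : ℝ) else -1))]
  simp_rw [gg_sum_sgn]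
  by_cases h : π = τ
  · subst h
    simp [Finset.prod_const, ← pow_mul, sq]
  · rw [if_neg h]
    obtain ⟨i, hi⟩ : ∃ i, π i ≠ τ i := by
      by_contra hc
      push_neg at hc
      exact h (Equiv.ext hc)
    exact Finset.prod_eq_zero (Finset.mem_univ i) (by simp [hi])

/-- Godzil–Gutman identity: the average over independent uniform random signs of
`det(√A .* σ)²` equals the permanent of `A`. -/
theorem godzil_gutman
    (N : ℕ) (A : Matrix (Fin N) (Fin N) ℝ) (hA : ∀ i j, 0 ≤ A i j) :
    ((2 : ℝ) ^ (N ^ 2))⁻¹ *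
      ∑ σ : Fin N → Fin N → Bool,
        (Matrix.det (Matrix.of fun i j =>
          Real.sqrt (A i j) * (if σ i j then 1 else -1))) ^ 2
      = A.permanent := by
  have hdet : ∀ σ : Fin N → Fin N → Bool,
      Matrix.det (Matrix.of fun i j =>
          Real.sqrt (A i j) * (if σ i j then (1:ℝ) else -1))
      = ∑ π : Equiv.Perm (Fin N), ((Equiv.Perm.sign π : ℤ) : ℝ) *
          ∏ i, Real.sqrt (A i (π i)) * (if σ i (π i) then (1:ℝ) else -1) := by
    intro σ
    rw [← Matrix.det_transpose, Matrix.det_apply']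
    simp [Matrix.transpose_apply]
  have key : ∑ σ : Fin N → Fin N → Bool,
      (Matrix.det (Matrix.of fun i j =>
          Real.sqrt (A i j) * (if σ i j then (1:ℝ) else -1))) ^ 2
      = 2 ^ (N ^ 2) * A.permanent := by
    simp_rw [hdet, sq, Finset.sum_mul_sum]
    rw [Finset.sum_comm]
    have hterm : ∀ (π τ : Equiv.Perm (Fin N)) (σ : Fin N → Fin N → Bool),
        (((Equiv.Perm.sign π : ℤ) : ℝ) *
            ∏ i, Real.sqrt (A i (π i)) * (if σ i (π i) then (1:ℝ) else -1)) *
        (((Equiv.Perm.sign τ : ℤ) : ℝ) *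
            ∏ i, Real.sqrt (A i (τ i)) * (if σ i (τ i) then (1:ℝ) else -1))
        = (((Equiv.Perm.sign π : ℤ) : ℝ) * ((Equiv.Perm.sign τ : ℤ) : ℝ) *
            ∏ i, (Real.sqrt (A i (π i)) * Real.sqrt (A i (τ i)))) *
          ∏ i, ((if σ i (π i) then (1:ℝ) else -1) * (if σ i (τ i) then (1:ℝ) else -1)) := by
      intro π τ σ
      simp_rw [Finset.prod_mul_distrib]
      ring
    have hinner : ∀ (π τ : Equiv.Perm (Fin N)),
        ∑ σ : Fin N → Fin N → Bool,
          (((Equiv.Perm.sign π : ℤ) : ℝ) *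
              ∏ i, Real.sqrt (A i (π i)) * (if σ i (π i) then (1:ℝ) else -1)) *
          (((Equiv.Perm.sign τ : ℤ) : ℝ) *
              ∏ i, Real.sqrt (A i (τ i)) * (if σ i (τ i) then (1:ℝ) else -1))
        = if π = τ then (2 : ℝ) ^ (N ^ 2) * ∏ i, A i (π i) else 0 := by
      intro π τ
      simp_rw [hterm, ← Finset.mul_sum, gg_sum_sgn_perm, mul_ite, mul_zero]
      by_cases h : π = τ
      · subst h
        rw [if_pos rfl, if_pos rfl]
        have hsgn : ((Equiv.Perm.sign π : ℤ) : ℝ) * ((Equiv.Perm.sign π : ℤ) : ℝ) = 1 := by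
          rw [← Int.cast_mul, ← Units.val_mul, Int.units_mul_self]
          simp
        have hsq : ∀ i, Real.sqrt (A i (π i)) * Real.sqrt (A i (π i)) = A i (π i) :=
          fun i => Real.mul_self_sqrt (hA i (π i))
        rw [hsgn, one_mul, Finset.prod_congr rfl (fun i _ => hsq i)]
        ring
      · rw [if_neg h, if_neg h]
    have houter : ∀ π : Equiv.Perm (Fin N),
        ∑ σ : Fin N → Fin N → Bool, ∑ τ : Equiv.Perm (Fin N),
          (((Equiv.Perm.sign π : ℤ) : ℝ) *
              ∏ i, Real.sqrt (A i (π i)) * (if σ i (π i) then (1:ℝ) else -1)) *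
          (((Equiv.Perm.sign τ : ℤ) : ℝ) *
              ∏ i, Real.sqrt (A i (τ i)) * (if σ i (τ i) then (1:ℝ) else -1))
        = (2 : ℝ) ^ (N ^ 2) * ∏ i, A i (π i) := by
      intro π
      rw [Finset.sum_comm]
      simp_rw [hinner π, Finset.sum_ite_eq (Finset.univ : Finset (Equiv.Perm (Fin N)))]
      simp
    have hperm : ∑ π : Equiv.Perm (Fin N), ∏ i, A i (π i) = A.permanent := by
      rw [← Matrix.permanent_transpose]
      simp [Matrix.permanent, Matrix.transpose_apply]
    rw [Finset.sum_congr rfl fun π _ => houter π, ← Finset.mul_sum, hperm, sq]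
  rw [key, inv_mul_cancel_left₀ (by positivity)]
end

section
/- (Invariance of the Gurvits capacity under the BP transformation) Suppose β is doubly stochastic with entries in (0,1), P_i^j > 0, and β_i^j(1-β_i^j) = P_i^j exp(μ_i+μ^j) for all i,j. Then Cap(p_P) = Z_BP · Cap(p_{β.*(1-β)}) · ∏_{i,j}(1-β_i^j)^{-1}, where Z_BP = ∏_{i,j}(1-β_i^j)·∏_i e^{-μ_i}·∏_j e^{-μ^j} and Cap(p_A) = inf_{x>0} ∏_i(∑_j A_{ij}x_j)/∏_j x_j. -/
open Matrix Finset Pointwise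

/-- Invariance of the Gurvits capacity under the BP transformation:
`Cap(p_P) = Z_BP · Cap(p_{β.*(1-β)}) · ∏ (1-β_i^j)⁻¹`. -/
theorem capacity_invariance
    (N : ℕ) (P β : Matrix (Fin N) (Fin N) ℝ) (μr μc : Fin N → ℝ)
    (hP : ∀ i j, 0 < P i j)
    (hβ0 : ∀ i j, 0 < β i j) (hβ1 : ∀ i j, β i j < 1)
    (hrow : ∀ i, ∑ j, β i j = 1) (hcol : ∀ j, ∑ i, β i j = 1)
    (hBP : ∀ i j, β i j * (1 - β i j) = P i j * Real.exp (μr i + μc j)) :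
    sInf {c : ℝ | ∃ x : Fin N → ℝ, (∀ j, 0 < x j) ∧
        c = (∏ i, ∑ j, P i j * x j) / ∏ j, x j}
      = ((∏ i, ∏ j, (1 - β i j)) * (∏ i, Real.exp (-μr i)) *
          ∏ j, Real.exp (-μc j)) *
        sInf {c : ℝ | ∃ x : Fin N → ℝ, (∀ j, 0 < x j) ∧
          c = (∏ i, ∑ j, (β i j * (1 - β i j)) * x j) / ∏ j, x j} *
        ∏ i, ∏ j, (1 - β i j)⁻¹ := by
  set k : ℝ := (∏ i, Real.exp (-μr i)) * ∏ j, Real.exp (-μc j) with hk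
  have hkpos : 0 < k := by positivity
  have hA : (0:ℝ) < ∏ i, ∏ j, (1 - β i j) := by
    apply Finset.prod_pos; intro i _; apply Finset.prod_pos; intro j _
    linarith [hβ1 i j]
  have hex : ∀ f : Fin N → ℝ, ∏ i, Real.exp (-f i) = (∏ i, Real.exp (f i))⁻¹ := by
    intro f; simp [Real.exp_neg, Finset.prod_inv_distrib]
  -- rewrite the set for P as k • (set for Q)
  have hset : {c : ℝ | ∃ x : Fin N → ℝ, (∀ j, 0 < x j) ∧
        c = (∏ i, ∑ j, P i j * x j) / ∏ j, x j}
      = k • {c : ℝ | ∃ x : Fin N → ℝ, (∀ j, 0 < x j) ∧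
          c = (∏ i, ∑ j, (β i j * (1 - β i j)) * x j) / ∏ j, x j} := by
    ext c
    simp only [Set.mem_smul_set, Set.mem_setOf_eq]
    constructor
    · rintro ⟨x, hx, rfl⟩
      refine ⟨(∏ i, ∑ j, (β i j * (1 - β i j)) * (Real.exp (-μc j) * x j)) /
          ∏ j, (Real.exp (-μc j) * x j),
        ⟨fun j => Real.exp (-μc j) * x j,
          fun j => mul_pos (Real.exp_pos _) (hx j), rfl⟩, ?_⟩
      have hnum : (∏ i, ∑ j, (β i j * (1 - β i j)) * (Real.exp (-μc j) * x j))
          = (∏ i, Real.exp (μr i)) * ∏ i, ∑ j, P i j * x j := by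
        rw [← Finset.prod_mul_distrib]
        refine Finset.prod_congr rfl fun i _ => ?_
        rw [Finset.mul_sum]
        refine Finset.sum_congr rfl fun j _ => ?_
        rw [hBP i j, Real.exp_add, Real.exp_neg]
        have : Real.exp (μc j) ≠ 0 := Real.exp_ne_zero _
        field_simp
      have hden : (∏ j, (Real.exp (-μc j) * x j))
          = (∏ j, Real.exp (-μc j)) * ∏ j, x j := Finset.prod_mul_distrib
      rw [hnum, hden, smul_eq_mul, hk, hex μr]
      have hxprod : (0:ℝ) < ∏ j, x j := Finset.prod_pos fun j _ => hx j
      have h1 : (∏ i, Real.exp (μr i)) ≠ 0 := by positivity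
      have h2 : (∏ j, Real.exp (-μc j)) ≠ 0 := by positivity
      field_simp
    · rintro ⟨d, ⟨x, hx, rfl⟩, rfl⟩
      refine ⟨fun j => Real.exp (μc j) * x j,
        fun j => mul_pos (Real.exp_pos _) (hx j), ?_⟩
      have hnum : (∏ i, ∑ j, P i j * (Real.exp (μc j) * x j))
          = (∏ i, Real.exp (-μr i)) * ∏ i, ∑ j, (β i j * (1 - β i j)) * x j := by
        rw [← Finset.prod_mul_distrib]
        refine Finset.prod_congr rfl fun i _ => ?_
        rw [Finset.mul_sum]
        refine Finset.sum_congr rfl fun j _ => ?_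
        rw [hBP i j, Real.exp_add, Real.exp_neg (μr i)]
        have : Real.exp (μr i) ≠ 0 := Real.exp_ne_zero _
        field_simp
      have hden : (∏ j, (Real.exp (μc j) * x j))
          = (∏ j, Real.exp (μc j)) * ∏ j, x j := Finset.prod_mul_distrib
      rw [hnum, hden, smul_eq_mul, hk, hex μc]
      have hxprod : (0:ℝ) < ∏ j, x j := Finset.prod_pos fun j _ => hx j
      have h1 : (∏ i, Real.exp (-μr i)) ≠ 0 := by positivity
      have h2 : (∏ j, Real.exp (μc j)) ≠ 0 := by positivity
      field_simp
  rw [hset, Real.sInf_smul_of_nonneg hkpos.le, smul_eq_mul]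
  have hinv : (∏ i, ∏ j, (1 - β i j)⁻¹) = (∏ i, ∏ j, (1 - β i j))⁻¹ := by
    simp [Finset.prod_inv_distrib]
  rw [hinv, hk]
  field_simp
end
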